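/- For every integer l ≥ 3, the symmetric group S_l on l letters is unround: it is not k-round for any integer k ≥ 2. -/

import Mathlib

/-- A cycle of length `n = Nat.card G` over `G` is a function `ZMod n → G`.
It is `k`-round if for all integers `m₁, …, m_k`, the map
`i ↦ g (i+m₁) * g (i+m₂) * ⋯ * g (i+m_k)` is a bijection from `ZMod n` to `G`. -/
def IsRoundCycle (G : Type*) [Group G] (k : ℕ) (g : ZMod (Nat.card G) → G) : Prop :=
  ∀ m : Fin k → ℤ,
    Function.Bijective fun i : ZMod (Nat.card G) =>
      (List.ofFn fun j : Fin k => g (i + (m j : ZMod (Nat.card G)))).prod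

/-- `G` is `k`-round if it admits a `k`-round cycle. -/
def IsKRound (G : Type*) [Group G] (k : ℕ) : Prop :=
  ∃ g : ZMod (Nat.card G) → G, IsRoundCycle G k g

/-- A cycle is totally round if it is `k`-round for every `k ≥ 1` with `gcd(k, n) = 1`. -/
def IsTotallyRoundCycle (G : Type*) [Group G] (g : ZMod (Nat.card G) → G) : Prop :=
  ∀ k : ℕ, 1 ≤ k → Nat.gcd k (Nat.card G) = 1 → IsRoundCycle G k g

/-- `G` is round if it admits a totally round cycle. -/
def IsRound (G : Type*) [Group G] : Prop :=
  ∃ g : ZMod (Nat.card G) → G, IsTotallyRoundCycle G g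

/-!
Suppose `g` is a `(b + r)`-round cycle of `Sₙ`. Shifting the last `r` entries by a common `a`
shows that `i ↦ g(i)^b g(i+a)^r` is a bijection for every `a`, so exactly `|Sₙ| · (n-1)!` pairs
`(x, y)` have `x^b y^r` fixing a given point `p`: as many as for a single uniform permutation.
But `x^b y^r` fixes `p` iff `y^r p = x^{-b} p`, and for uniform `x, y` both points are uniformly
distributed off `p`, with mass more than `1/n` at `p` as soon as some permutation moving `p` has
trivial `b`-th, resp. `r`-th, power; then they agree with probability more than `1/n`.
Writing `k = b + r` with `b` even and `r ∈ {2, 3}`, a transposition and a `3`-cycle do this.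
-/

open Finset

namespace IsRoundCycle

variable {G : Type*} [Group G] {k : ℕ} {g : ZMod (Nat.card G) → G}

theorem bijective [Finite G] (hg : IsRoundCycle G k g) : Function.Bijective g := by
  have : NeZero (Nat.card G) := ⟨Nat.card_pos.ne'⟩
  have hpow : Function.Injective fun i => g i ^ k := by
    simpa using (hg fun _ => 0).injective
  rw [Nat.bijective_iff_injective_and_card, Nat.card_zmod]
  exact ⟨fun i j hij => hpow (by simp only [hij]), rfl⟩

theorem bijective_pow_mul_pow [Finite G] {b r : ℕ} (hg : IsRoundCycle G (b + r) g)
    (a : ZMod (Nat.card G)) : Function.Bijective fun i => g i ^ b * g (i + a) ^ r := by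
  have : NeZero (Nat.card G) := ⟨Nat.card_pos.ne'⟩
  convert hg (Fin.append (fun _ => 0) fun _ => (a.val : ℤ)) using 2 with i
  simp [List.ofFn_add, Fin.append_right]

theorem sum_sum_pow_mul_pow [Fintype G] {M : Type*} [AddCommMonoid M] {b r : ℕ}
    (hg : IsRoundCycle G (b + r) g) (F : G → M) :
    ∑ x : G, ∑ y : G, F (x ^ b * y ^ r) = Nat.card G • ∑ z : G, F z := by
  have : NeZero (Nat.card G) := ⟨Nat.card_pos.ne'⟩
  have hgbij := hg.bijective
  calc ∑ x : G, ∑ y : G, F (x ^ b * y ^ r)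
      = ∑ i, ∑ a, F (g i ^ b * g (i + a) ^ r) := by
        rw [← hgbij.sum_comp]
        refine sum_congr rfl fun i _ => ?_
        rw [← hgbij.sum_comp, ← (Equiv.addLeft i).bijective.sum_comp]
        rfl
    _ = ∑ a, ∑ i, F (g i ^ b * g (i + a) ^ r) := sum_comm
    _ = ∑ _a : ZMod (Nat.card G), ∑ z : G, F z :=
        sum_congr rfl fun a _ => (hg.bijective_pow_mul_pow a).sum_comp F
    _ = Nat.card G • ∑ z : G, F z := by simp

end IsRoundCycle

theorem Fintype.sum_mul_sum_lt_card_mul_sum_of_peak {ι R : Type*} [Fintype ι] [DecidableEq ι]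
    [CommRing R] [LinearOrder R] [IsStrictOrderedRing R] {f g : ι → R} {p : ι}
    (hf : ∀ q ≠ p, ∀ q' ≠ p, f q = f q') (hg : ∀ q ≠ p, ∀ q' ≠ p, g q = g q')
    (hfp : ∑ q, f q < Fintype.card ι * f p) (hgp : ∑ q, g q < Fintype.card ι * g p) :
    (∑ q, f q) * ∑ q, g q < Fintype.card ι * ∑ q, f q * g q := by
  obtain ⟨q₀, hq₀⟩ : ∃ q₀, q₀ ≠ p := by
    by_contra! h
    have : ∑ q, f q = f p := Fintype.sum_eq_single p fun q hq => absurd (h q) hq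
    simp_all [Fintype.card_eq_one_iff.mpr ⟨p, h⟩]
  have hsplit (u : ι → R) (hu : ∀ q ≠ p, u q = u q₀) :
      ∑ q, u q = u p + (Fintype.card ι - 1) * u q₀ := by
    rw [← add_sum_erase _ _ (mem_univ p),
      Finset.sum_congr rfl fun q hq => hu q (ne_of_mem_erase hq), sum_const,
      card_erase_of_mem (mem_univ p), card_univ, nsmul_eq_mul,
      Nat.cast_sub (Fintype.card_pos_iff.2 ⟨p⟩), Nat.cast_one]
  have hn : (1 : R) < Fintype.card ι := by
    exact_mod_cast Fintype.one_lt_card_iff.2 ⟨q₀, p, hq₀⟩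
  have hsf := hsplit f fun q hq => hf q hq q₀ hq₀
  have hsg := hsplit g fun q hq => hg q hq q₀ hq₀
  rw [hsf] at hfp
  rw [hsg] at hgp
  rw [hsf, hsg, hsplit _ fun q hq => by rw [hf q hq q₀ hq₀, hg q hq q₀ hq₀]]
  set n : R := (Fintype.card ι : R)
  -- `n ∑ f g - ∑ f ∑ g = (n - 1) (f p - f q₀) (g p - g q₀)`
  have hf_lt : f q₀ < f p := by nlinarith
  have hg_lt : g q₀ < g p := by nlinarith
  nlinarith [mul_pos (sub_pos.2 hn) (mul_pos (sub_pos.2 hf_lt) (sub_pos.2 hg_lt))]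

namespace Equiv.Perm

variable {α : Type*} [Fintype α] [DecidableEq α]

def numPowMapsTo (c : ℕ) (p q : α) : ℕ := #{x : Perm α | (x ^ c) p = q}

theorem sum_numPowMapsTo (c : ℕ) (p : α) :
    ∑ q, numPowMapsTo c p q = Fintype.card (Perm α) := by
  simp_rw [numPowMapsTo, ← card_univ (α := Perm α)]
  exact (card_eq_sum_card_fiberwise fun x _ => mem_univ _).symm

theorem numPowMapsTo_comm (c : ℕ) (p q : α) : numPowMapsTo c p q = numPowMapsTo c q p := by
  refine card_nbij' (·⁻¹) (·⁻¹) ?_ ?_ (fun x _ => inv_inv x) (fun x _ => inv_inv x) <;>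
  · intro x hx
    simp only [coe_filter, Set.mem_ofPred_eq, mem_univ, true_and, inv_pow] at hx ⊢
    rw [inv_eq_iff_eq, hx]

theorem numPowMapsTo_eq_of_ne (c : ℕ) {p q q' : α} (hq : q ≠ p) (hq' : q' ≠ p) :
    numPowMapsTo c p q = numPowMapsTo c p q' := by
  have hconj (x : Perm α) : (swap q q' * x * swap q q') ^ c = swap q q' * x ^ c * swap q q' := by
    simpa using conj_pow (a := swap q q') (b := x) (i := c)
  refine card_nbij' (fun x => swap q q' * x * swap q q') (fun x => swap q q' * x * swap q q')
    ?_ ?_ (fun x _ => by simp [mul_assoc]) (fun x _ => by simp [mul_assoc])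
  all_goals
    intro x hx
    simp only [coe_filter, Set.mem_ofPred_eq, mem_univ, true_and, hconj, mul_apply] at hx ⊢
    rw [swap_apply_of_ne_of_ne hq.symm hq'.symm, hx]
    simp

theorem card_mul_card_stabilizer (p : α) :
    Fintype.card α * #{x : Perm α | x p = p} = Fintype.card (Perm α) := by
  have h := (MulAction.stabilizer (Perm α) p).card_mul_index
  rw [MulAction.index_stabilizer_of_transitive, Nat.card_eq_fintype_card (α := Perm α),
    Nat.card_eq_fintype_card (α := α)] at h
  rw [← h, mul_comm, Nat.card_eq_fintype_card, Fintype.card_subtype]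
  simp [MulAction.mem_stabilizer_iff]

theorem card_stabilizer_lt_numPowMapsTo_self {c : ℕ} {p : α} {ξ : Perm α} (hξ : ξ ^ c = 1)
    (hξp : ξ p ≠ p) : #{x : Perm α | x p = p} < numPowMapsTo c p p := by
  refine card_lt_card ((ssubset_iff_of_subset fun x hx => ?_).2 ⟨ξ, ?_, ?_⟩)
  · simp only [mem_filter, mem_univ, true_and] at hx ⊢
    exact Function.IsFixedPt.perm_pow hx c
  · simp [hξ]
  · simp [hξp]

theorem sum_sum_ite_pow_mul_pow_apply_eq_self (b r : ℕ) (p : α) :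
    ∑ x : Perm α, ∑ y : Perm α, (if (x ^ b * y ^ r) p = p then 1 else 0) =
      ∑ q, numPowMapsTo b p q * numPowMapsTo r p q := by
  calc ∑ x : Perm α, ∑ y : Perm α, (if (x ^ b * y ^ r) p = p then 1 else 0)
      = ∑ y : Perm α, numPowMapsTo b p ((y ^ r) p) := by
        rw [sum_comm]
        refine sum_congr rfl fun y _ => ?_
        rw [numPowMapsTo_comm, numPowMapsTo, card_filter]
        rfl
    _ = ∑ q, numPowMapsTo b p q * numPowMapsTo r p q := by
        rw [← sum_fiberwise' univ (fun y : Perm α => (y ^ r) p)]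
        simp_rw [sum_const, smul_eq_mul, mul_comm]
        rfl

theorem not_isRoundCycle_of_pow_eq_one {b r : ℕ} (p : α) {ξ η : Perm α}
    (hξ : ξ ^ b = 1) (hξp : ξ p ≠ p) (hη : η ^ r = 1) (hηp : η p ≠ p)
    (g : ZMod (Nat.card (Perm α)) → Perm α) : ¬ IsRoundCycle (Perm α) (b + r) g := by
  intro hg
  have hcount : ∑ q, numPowMapsTo b p q * numPowMapsTo r p q =
      Fintype.card (Perm α) * #{x : Perm α | x p = p} := by
    rw [← sum_sum_ite_pow_mul_pow_apply_eq_self,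
      hg.sum_sum_pow_mul_pow fun σ => if σ p = p then 1 else 0, sum_boole,
      Nat.card_eq_fintype_card, smul_eq_mul, Nat.cast_id]
  have hpeak (c : ℕ) {ζ : Perm α} (hζ : ζ ^ c = 1) (hζp : ζ p ≠ p) :
      ∑ q, (numPowMapsTo c p q : ℤ) < Fintype.card α * (numPowMapsTo c p p : ℤ) := by
    rw [← Nat.cast_sum, sum_numPowMapsTo, ← card_mul_card_stabilizer p]
    exact_mod_cast Nat.mul_lt_mul_of_pos_left (card_stabilizer_lt_numPowMapsTo_self hζ hζp)
      (Fintype.card_pos_iff.2 ⟨p⟩)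
  have key := Fintype.sum_mul_sum_lt_card_mul_sum_of_peak (R := ℤ)
    (fun q hq q' hq' => congrArg _ (numPowMapsTo_eq_of_ne b hq hq'))
    (fun q hq q' hq' => congrArg _ (numPowMapsTo_eq_of_ne r hq hq'))
    (hpeak b hξ hξp) (hpeak r hη hηp)
  rw [← Nat.cast_sum, ← Nat.cast_sum, sum_numPowMapsTo, sum_numPowMapsTo] at key
  norm_cast at key
  rw [hcount, mul_left_comm, card_mul_card_stabilizer] at key
  exact lt_irrefl _ key

end Equiv.Perm

/-- For every `l ≥ 3`, the symmetric group `S_l` is unround: it is not `k`-round for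
any `k ≥ 2`. -/
theorem statement15 (l : ℕ) (hl : 3 ≤ l) :
    ∀ k : ℕ, 2 ≤ k → ¬ IsKRound (Equiv.Perm (Fin l)) k := by
  rintro k hk ⟨g, hg⟩
  obtain ⟨p, q, s, hpq, hps, hqs⟩ :=
    Fintype.two_lt_card_iff.1 (by rw [Fintype.card_fin]; omega : 2 < Fintype.card (Fin l))
  obtain ⟨τ, hτ, hτp⟩ : ∃ τ : Equiv.Perm (Fin l), (∀ m, τ ^ (2 * m) = 1) ∧ τ p ≠ p :=
    ⟨Equiv.swap p q, fun m => by rw [pow_mul, sq, Equiv.swap_mul_self, one_pow],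
      by simpa using hpq.symm⟩
  obtain ⟨σ, hσ, hσp⟩ : ∃ σ : Equiv.Perm (Fin l), σ ^ 3 = 1 ∧ σ p ≠ p :=
    ⟨Equiv.swap p q * Equiv.swap p s,
      (Equiv.Perm.isThreeCycle_swap_mul_swap_same hpq hps hqs).orderOf ▸ pow_orderOf_eq_one _,
      by simpa [Equiv.swap_apply_of_ne_of_ne hps.symm hqs.symm] using hps.symm⟩
  obtain ⟨m, rfl | rfl⟩ : ∃ m, k = 2 * m + 2 ∨ k = 2 * m + 3 := ⟨(k - 2) / 2, by omega⟩
  · exact Equiv.Perm.not_isRoundCycle_of_pow_eq_one p (hτ m) hτp (hτ 1) hτp g hg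
  · exact Equiv.Perm.not_isRoundCycle_of_pow_eq_one p (hτ m) hτp hσ hσp g hg
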